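/- arXiv:1811.03185 — 6 statements merged into one kernel-verified Lean document; each statement's English description precedes it below -/
import Mathlib

section
/- Let A be a finite alphabet and let F ⊆ A* be a recurrent set. If X is a rational bifix code contained in F, then X is F-thin, i.e., some word of F is not a factor of any element of X. -/
/-! Common definitions: words over a finite alphabet `A` are terms of `List A`,
concatenation being the monoid operation of the free monoid `A*`. -/

namespace PaperDefs

variable {A : Type*}

/-- `w` belongs to the Kleene star `X*` of `X`: it is a (possibly empty)
concatenation of elements of `X`. -/
def InStar (X : Set (List A)) (w : List A) : Prop :=
  ∃ l : List (List A), (∀ u ∈ l, u ∈ X) ∧ l.flatten = w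

/-- The language `X*`. -/
def star (X : Set (List A)) : Set (List A) := {w | InStar X w}

/-- A prefix code: a nonempty set of nonempty words, none of which is a proper
prefix of another. -/
def IsPrefixCode (X : Set (List A)) : Prop :=
  X.Nonempty ∧ (∀ w ∈ X, w ≠ []) ∧ ∀ u ∈ X, ∀ v ∈ X, u <+: v → u = v

/-- A suffix code. -/
def IsSuffixCode (X : Set (List A)) : Prop :=
  X.Nonempty ∧ (∀ w ∈ X, w ≠ []) ∧ ∀ u ∈ X, ∀ v ∈ X, u <:+ v → u = v

/-- A bifix code. -/
def IsBifixCode (X : Set (List A)) : Prop := IsPrefixCode X ∧ IsSuffixCode X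

/-- A factorial set contains all factors of its elements. -/
def Factorial (F : Set (List A)) : Prop := ∀ w ∈ F, ∀ u, u <:+: w → u ∈ F

/-- A recurrent set. -/
def Recurrent (F : Set (List A)) : Prop :=
  Factorial F ∧ F.Nonempty ∧ F ≠ {[]} ∧ ∀ u ∈ F, ∀ v ∈ F, ∃ w, u ++ w ++ v ∈ F

/-- A uniformly recurrent set. -/
def UniformlyRecurrent (F : Set (List A)) : Prop :=
  Recurrent F ∧ ∀ u ∈ F, ∃ n : ℕ, ∀ w ∈ F, n ≤ w.length → u <:+: w

/-- A parse of `w` with respect to `X` : a triple `(v, x, u)` with `w = v x u`,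
`v` has no suffix in `X`, `x ∈ X*`, and `u` has no prefix in `X`. -/
def IsParse (X : Set (List A)) (w : List A) (p : List A × List A × List A) : Prop :=
  p.1 ++ p.2.1 ++ p.2.2 = w ∧ (¬ ∃ s ∈ X, s <:+ p.1) ∧ InStar X p.2.1 ∧
    ¬ ∃ s ∈ X, s <+: p.2.2

/-- `δ_X(w)`, the number of parses of `w` with respect to `X`. -/
noncomputable def delta (X : Set (List A)) (w : List A) : ℕ :=
  {p | IsParse X w p}.ncard

/-- The `F`-degree `d_F(X)` of `X`, as an extended natural number. -/
noncomputable def Fdeg (X F : Set (List A)) : ℕ∞ :=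
  ⨆ w ∈ F, (delta X w : ℕ∞)

/-- The degree `d(X)` of `X`. -/
noncomputable def deg (X : Set (List A)) : ℕ∞ := Fdeg X Set.univ

/-- An `F`-maximal bifix code. -/
def IsFMaximalBifixCode (F X : Set (List A)) : Prop :=
  IsBifixCode X ∧ X ⊆ F ∧ ∀ Y : Set (List A), IsBifixCode Y → Y ⊆ F → X ⊆ Y → Y = X

/-- An `F`-maximal prefix code. -/
def IsFMaximalPrefixCode (F X : Set (List A)) : Prop :=
  IsPrefixCode X ∧ X ⊆ F ∧ ∀ Y : Set (List A), IsPrefixCode Y → Y ⊆ F → X ⊆ Y → Y = X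

/-- `X` is `F`-thin: some word of `F` is not a factor of any element of `X`. -/
def FThin (F X : Set (List A)) : Prop := ∃ w ∈ F, ∀ x ∈ X, ¬ w <:+: x

/-- A rational (regular) language. -/
def IsRational (L : Set (List A)) : Prop :=
  ∃ (σ : Type) (_ : Fintype σ) (M : DFA A σ), ∀ w : List A, w ∈ M.accepts ↔ w ∈ L

/-- The syntactic congruence of the language `L`. -/
def SynEquiv (L : Set (List A)) (u v : List A) : Prop :=
  ∀ x y : List A, x ++ u ++ y ∈ L ↔ x ++ v ++ y ∈ L

/-- `η : A* → M` is (a realization of) the syntactic homomorphism onto the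
syntactic monoid of `L`. -/
structure IsSyntacticHom (L : Set (List A)) {M : Type*} [Monoid M] (η : List A → M) : Prop where
  map_nil : η [] = 1
  map_append : ∀ u v : List A, η (u ++ v) = η u * η v
  surj : Function.Surjective η
  syn : ∀ u v : List A, η u = η v ↔ SynEquiv L u v

section Green

variable {M : Type*} [Monoid M]

/-- The `J`-order: `MuM ⊆ MvM`. -/
def JLe (u v : M) : Prop := ∃ x y, u = x * v * y

/-- Green's relation `J`. -/
def JEquiv (u v : M) : Prop := JLe u v ∧ JLe v u

/-- Green's relation `R`. -/
def REquiv (u v : M) : Prop := (∃ x, v = u * x) ∧ (∃ x, u = v * x)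

/-- Green's relation `L`. -/
def LEquiv (u v : M) : Prop := (∃ x, v = x * u) ∧ (∃ x, u = x * v)

/-- Green's relation `H`. -/
def HEquiv (u v : M) : Prop := REquiv u v ∧ LEquiv u v

/-- Green's relation `D`. -/
def DEquiv (u v : M) : Prop := ∃ s, REquiv u s ∧ LEquiv s v

/-- The `H`-class of an element. -/
def HClass (e : M) : Set M := {m | HEquiv m e}

/-- Membership in the minimum ideal (minimum `J`-class) of `M`. -/
def InMinIdeal (m : M) : Prop := ∀ n : M, JLe m n

/-- `S` is a subgroup of the monoid `M`: a subsemigroup which is a group. -/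
def IsSubgroupIn (S : Set M) : Prop :=
  S.Nonempty ∧ (∀ x ∈ S, ∀ y ∈ S, x * y ∈ S) ∧
    ∃ e ∈ S, (∀ x ∈ S, e * x = x ∧ x * e = x) ∧ ∀ x ∈ S, ∃ y ∈ S, x * y = e ∧ y * x = e

/-- The subsets `S ⊆ M` and `T ⊆ N` (each closed under multiplication, e.g.
maximal subgroups) are isomorphic as groups: there is a multiplicative
bijection from `S` onto `T`. -/
def GroupIsoOn {N : Type*} [Monoid N] (S : Set M) (T : Set N) : Prop :=
  ∃ φ : M → N, Set.BijOn φ S T ∧ ∀ x ∈ S, ∀ y ∈ S, φ (x * y) = φ x * φ y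

end Green

/-- `m` belongs to `J_F(X)`, the minimum `J`-class of the syntactic monoid of
`X*` meeting the image of `F` under the syntactic homomorphism `η`. -/
def InFMinJ {M : Type*} [Monoid M] (η : List A → M) (F : Set (List A)) (m : M) : Prop :=
  (∃ w ∈ F, JEquiv m (η w)) ∧ ∀ w ∈ F, JLe m (η w)

/-- A group code: a prefix code `Z` defined by a transitive permutation
representation of `A*` on a finite set, `Z*` being the stabilizer of a point. -/
def IsGroupCode (Z : Set (List A)) : Prop :=
  IsPrefixCode Z ∧
  ∃ (Q : Type) (_ : Fintype Q) (q₀ : Q) (α : List A → Equiv.Perm Q),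
    α [] = 1 ∧ (∀ u v : List A, α (u ++ v) = α u * α v) ∧
    (∀ q q' : Q, ∃ w : List A, α w q = q') ∧
    (∀ w : List A, InStar Z w ↔ α w q₀ = q₀) ∧
    Z = {w : List A | α w q₀ = q₀ ∧ w ≠ [] ∧
          ¬ ∃ u v : List A, u ≠ [] ∧ v ≠ [] ∧ α u q₀ = q₀ ∧ α v q₀ = q₀ ∧ w = u ++ v}

/-- Vertices of the extension graph of `w` in `F`: the disjoint union of
`L(w)` and `R(w)`. -/
def ExtVertex (F : Set (List A)) (w : List A) : Sum A A → Prop :=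
  fun x => Sum.elim (fun a => a :: w ∈ F) (fun b => w ++ [b] ∈ F) x

/-- The edge relation of the extension graph of `w` in `F`. -/
def ExtRel (F : Set (List A)) (w : List A) : Sum A A → Sum A A → Prop :=
  fun x y =>
    match x, y with
    | Sum.inl a, Sum.inr b => a :: (w ++ [b]) ∈ F
    | _, _ => False

/-- The extension graph `G(w)` of `w` in `F`. -/
def extGraph (F : Set (List A)) (w : List A) :
    SimpleGraph {x : Sum A A // ExtVertex F w x} :=
  SimpleGraph.fromRel fun x y => ExtRel F w x.1 y.1

/-- `F` is connected: every extension graph of a word of `F` is connected. -/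
def ConnectedSet (F : Set (List A)) : Prop :=
  ∀ w ∈ F, (extGraph F w).Connected

/-- `F` is a tree set: every extension graph of a word of `F` is a tree. -/
def TreeSet (F : Set (List A)) : Prop :=
  ∀ w ∈ F, (extGraph F w).IsTree

/-- The alphabet of `F` is the whole of `A`. -/
def AlphabetIs (F : Set (List A)) : Prop := ∀ a : A, [a] ∈ F

/-- The left quotient `u⁻¹L`, i.e. the state reached from the initial state of
the minimal automaton of `L` by reading `u`. -/
def leftQuot (L : Set (List A)) (u : List A) : Set (List A) := {w | u ++ w ∈ L}

/-- The set of states of the minimal automaton of `L`: the nonempty left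
quotients of `L`. -/
def MinStates (L : Set (List A)) : Set (Set (List A)) :=
  {q | q.Nonempty ∧ ∃ u : List A, q = leftQuot L u}

/-- The (partial) transition of the minimal automaton: `q · v`; it is defined
when the resulting set is nonempty. -/
def stepW (q : Set (List A)) (v : List A) : Set (List A) := {w | v ++ w ∈ q}

/-- The rank of the word `v` in the minimal automaton of `L`: the number of
distinct states `q · v` with `q` a state such that `q · v` is defined. -/
noncomputable def wordRank (L : Set (List A)) (v : List A) : ℕ :=
  ((fun q => stepW q v) '' {q ∈ MinStates L | (stepW q v).Nonempty}).ncard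

/-- The set of first return words of `F` to `u`. -/
def ReturnWords (F : Set (List A)) (u : List A) : Set (List A) :=
  {v | v ≠ [] ∧ u ++ v ∈ F ∧ u <:+ u ++ v ∧
    ¬ ∃ x y : List A, x ≠ [] ∧ y ≠ [] ∧ u ++ v = x ++ u ++ y}

/-- A code: every word has at most one factorization into elements of `X`. -/
def IsCode (X : Set (List A)) : Prop :=
  ∀ l m : List (List A), (∀ u ∈ l, u ∈ X) → (∀ u ∈ m, u ∈ X) →
    l.flatten = m.flatten → l = m

/-- The set `I = Q_X · K` of images of states of the minimal automaton of `L`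
under (partial) transitions by words whose syntactic image lies in `K`. -/
def ImageSet (L : Set (List A)) {M : Type*} [Monoid M] (η : List A → M) (K : Set M) :
    Set (Set (List A)) :=
  {p | ∃ q ∈ MinStates L, ∃ v : List A, η v ∈ K ∧ (stepW q v).Nonempty ∧ p = stepW q v}

/-- A witness for "a finite monoid `M` together with a monoid homomorphism
`A* → M`". -/
structure FiniteMonoidHomWitness (A : Type*) where
  M : Type
  [fin : Fintype M]
  [mon : Monoid M]
  φ : List A → M
  map_nil : φ [] = 1
  map_append : ∀ u v : List A, φ (u ++ v) = φ u * φ v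

end PaperDefs

/-! Fix a deterministic automaton recognizing `X` and a nonempty word `w ∈ F` whose image `Q·w`
is as small as possible. If `X` were not `F`-thin, `w` would occur in some `x = u w v' ∈ X`, and
recurrence would give `x b w ∈ F`. Then `w (v' b w) ∈ F` has the same image as `w`, so `v' b w`
permutes `Q·w` and some power `(v' b w)^n` fixes it pointwise. Hence
`x (b w v')^n = u w (v' b w)^n v'` is accepted as well, and `x` is a proper prefix of an element
of `X`. -/

theorem exists_pow_mul_eq_self_of_eq_mul_mul {M : Type*} [Monoid M] [Finite M] {a s x : M}
    (h : s = a * s * x) : ∃ n, 0 < n ∧ a ^ n * s = s := by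
  have hiter : ∀ k, s = a ^ k * s * x ^ k := by
    intro k
    induction k with
    | zero => simp
    | succ k ih =>
      calc s = a ^ k * (a * s * x) * x ^ k := by rw [← h, ← ih]
        _ = a ^ (k + 1) * s * x ^ (k + 1) := by
          rw [pow_succ a, pow_succ' x]; simp only [mul_assoc]
  obtain ⟨i, j, hij, hpow⟩ := Finite.exists_ne_map_eq_of_infinite (a ^ · : ℕ → M)
  wlog hlt : i < j generalizing i j
  · exact this j i hij.symm hpow.symm (by omega)
  refine ⟨j - i, by omega, ?_⟩
  calc a ^ (j - i) * s = a ^ (j - i) * (a ^ i * s * x ^ i) := by rw [← hiter]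
    _ = a ^ j * s * x ^ i := by
      rw [← mul_assoc, ← mul_assoc, ← pow_add, Nat.sub_add_cancel hlt.le]
    _ = s := by rw [← hpow, ← hiter]

theorem List.append_flatten_replicate_append {α : Type*} (p q : List α) (n : ℕ) :
    p ++ (List.replicate n (q ++ p)).flatten = (List.replicate n (p ++ q)).flatten ++ p := by
  induction n with
  | zero => simp
  | succ n ih => simp only [List.replicate_succ, List.flatten_cons, List.append_assoc, ih]

namespace DFA

variable {α σ : Type*} (M : DFA α σ)

theorem range_evalFrom_append_subset (u v : List α) :
    Set.range (M.evalFrom · (u ++ v)) ⊆ Set.range (M.evalFrom · v) := by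
  rintro _ ⟨q, rfl⟩
  exact ⟨M.evalFrom q u, (M.evalFrom_of_append q u v).symm⟩

theorem evalFrom_flatten_replicate (u : List α) (n : ℕ) (q : σ) :
    M.evalFrom q (List.replicate n u).flatten = (M.evalFrom · u)^[n] q := by
  induction n generalizing q with
  | zero => rfl
  | succ n ih =>
    rw [List.replicate_succ, List.flatten_cons, evalFrom_of_append, ih,
      Function.iterate_succ_apply]

theorem exists_evalFrom_flatten_replicate_eq_of_range_eq [Finite σ] {w v : List α}
    (h : Set.range (M.evalFrom · (w ++ v ++ w)) = Set.range (M.evalFrom · w)) :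
    ∃ n, 0 < n ∧ ∀ q,
      M.evalFrom (M.evalFrom q w) (List.replicate n (v ++ w)).flatten = M.evalFrom q w := by
  have : Finite (Function.End σ) := inferInstanceAs (Finite (σ → σ))
  let a : Function.End σ := (M.evalFrom · (v ++ w))
  let s : Function.End σ := (M.evalFrom · w)
  have hpre : ∀ q, ∃ q', M.evalFrom (M.evalFrom q' w) (v ++ w) = M.evalFrom q w := by
    intro q
    obtain ⟨q', hq'⟩ := h.symm ▸ Set.mem_range_self q
    exact ⟨q', by simp only [← hq', List.append_assoc, M.evalFrom_of_append]⟩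
  choose x hx using hpre
  obtain ⟨n, hn, hs⟩ := exists_pow_mul_eq_self_of_eq_mul_mul (a := a) (s := s) (x := x)
    (funext fun q => (hx q).symm)
  refine ⟨n, hn, fun q => ?_⟩
  rw [evalFrom_flatten_replicate]
  exact congrFun hs q

end DFA

namespace PaperDefs

variable {A : Type*}

theorem IsPrefixCode.eq_nil_of_append_mem {X : Set (List A)} (hX : IsPrefixCode X) {x y : List A}
    (hx : x ∈ X) (hxy : x ++ y ∈ X) : y = [] := by
  simpa using (hX.2.2 x hx (x ++ y) hxy (List.prefix_append x y)).symm

theorem Recurrent.exists_ne_nil {F : Set (List A)} (hF : Recurrent F) : ∃ w ∈ F, w ≠ [] := by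
  by_contra! h
  exact hF.2.2.1 (Set.eq_singleton_iff_nonempty_unique_mem.2 ⟨hF.2.1, h⟩)

theorem fThin_of_isPrefixCode {σ : Type*} [Finite σ] {F X : Set (List A)} (hF : Recurrent F)
    (hX : IsPrefixCode X) (hXF : X ⊆ F) (M : DFA A σ) (hM : ∀ w, w ∈ M.accepts ↔ w ∈ X) :
    FThin F X := by
  let rank : List A → ℕ := fun w => (Set.range (M.evalFrom · w)).ncard
  obtain ⟨w, ⟨hwF, hw⟩, hmin⟩ :=
    (measure rank).wf.has_min {w | w ∈ F ∧ w ≠ []} hF.exists_ne_nil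
  rw [FThin]
  by_contra! hthin
  obtain ⟨_, hxX, u, v', rfl⟩ := hthin w hwF
  obtain ⟨b, hb⟩ := hF.2.2.2 _ (hXF hxX) w hwF
  have hwvw : w ++ (v' ++ b) ++ w ∈ F :=
    hF.1 _ hb _ ⟨u, [], by simp only [List.append_assoc, List.append_nil]⟩
  have hrange : Set.range (M.evalFrom · (w ++ (v' ++ b) ++ w)) = Set.range (M.evalFrom · w) :=
    Set.eq_of_subset_of_ncard_le (M.range_evalFrom_append_subset _ _)
      (not_lt.1 (hmin _ ⟨hwvw, by simp [hw]⟩)) (Set.toFinite _)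
  obtain ⟨n, hn, hpump⟩ := M.exists_evalFrom_flatten_replicate_eq_of_range_eq hrange
  have hrot : u ++ w ++ v' ++ (List.replicate n (b ++ w ++ v')).flatten =
      u ++ (w ++ (List.replicate n (v' ++ b ++ w)).flatten) ++ v' := by
    have := List.append_flatten_replicate_append v' (b ++ w) n
    simp only [List.append_assoc] at this ⊢
    rw [this]
  have hpumped : u ++ w ++ v' ++ (List.replicate n (b ++ w ++ v')).flatten ∈ X := by
    rw [← hM, M.mem_accepts] at hxX ⊢
    simpa only [hrot, DFA.eval, DFA.evalFrom_of_append, hpump] using hxX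
  have hnil := hX.eq_nil_of_append_mem hxX hpumped
  obtain ⟨k, rfl⟩ := Nat.exists_eq_add_one_of_ne_zero hn.ne'
  simp [List.replicate_succ, hw] at hnil

end PaperDefs

open PaperDefs in
theorem stmt_2_general {A : Type}
    (F X : Set (List A)) (hF : Recurrent F)
    (hX : IsBifixCode X) (hXF : X ⊆ F) (hrat : IsRational X) :
    FThin F X := by
  obtain ⟨σ, _, M, hM⟩ := hrat
  exact fThin_of_isPrefixCode hF hX.1 hXF M hM

open PaperDefs in
theorem stmt_2 {A : Type} [Fintype A]
    (F X : Set (List A)) (hF : Recurrent F)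
    (hX : IsBifixCode X) (hXF : X ⊆ F) (hrat : IsRational X) :
    FThin F X :=
  stmt_2_general F X hF hX hXF hrat
end

section
/- Let A be a finite alphabet, let F ⊆ A* be a recurrent set, and let X ⊆ F be a rational bifix code. Then the F-degree d_F(X) is finite if and only if X is an F-maximal bifix code. -/
/-! For a prefix code `X`, the parses of `w` are determined by their first component, so `δ_X(w)`
counts the prefixes of `w` without a suffix in `X`; dually for suffix codes.

If a word `y ∉ X` can be added to `X` inside `F`, no word ending with `y` has a suffix in `X`, and
by recurrence the words `y s₁ y s₂ ⋯ y ∈ F` have unboundedly many parses.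

Conversely, let `X` be recognized by a DFA and let `w ∈ F` have more parses than there are
transformations of the states. Then two prefixes `u` and `u t` (`t ≠ ε`) of `w` without a suffix in
`X` act alike, so no `α u t` lies in `X` (it would have the proper prefix `α u ∈ X`): `ζ = u t` is
incomparable with `X` for the suffix order. Dually a factor `ζ'` of `w` is incomparable with `X` for
the prefix order, and a word `ζ' s ζ ∈ F` can be added to the bifix code `X`. -/

namespace PaperDefs

variable {A : Type*} {X : Set (List A)}

theorem inStar_nil : InStar X [] := ⟨[], by simp, rfl⟩

theorem inStar_of_mem {x : List A} (hx : x ∈ X) : InStar X x := ⟨[x], by simpa, by simp⟩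

theorem InStar.append {u v : List A} (hu : InStar X u) (hv : InStar X v) :
    InStar X (u ++ v) := by
  obtain ⟨l, hl, rfl⟩ := hu
  obtain ⟨m, hm, rfl⟩ := hv
  exact ⟨l ++ m, fun a ha => (List.mem_append.mp ha).elim (hl a) (hm a), by simp⟩

theorem InStar.exists_prefix_mem {z : List A} (hz : InStar X z) (hne : z ≠ []) :
    ∃ x ∈ X, x <+: z := by
  obtain ⟨_ | ⟨a, l⟩, hl, rfl⟩ := hz
  · exact absurd rfl hne
  · exact ⟨a, hl a List.mem_cons_self, List.prefix_append _ _⟩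

theorem IsPrefixCode.inStar_of_mem_append (hX : IsPrefixCode X) {a y : List A} (ha : a ∈ X)
    (h : InStar X (a ++ y)) : InStar X y := by
  obtain ⟨_ | ⟨b, m⟩, hm, hmy⟩ := h
  · exact absurd (List.append_eq_nil_iff.mp hmy.symm).1 (hX.2.1 a ha)
  · have hb : b ∈ X := hm b List.mem_cons_self
    rw [List.flatten_cons] at hmy
    have hab : a = b := by
      rcases List.prefix_or_prefix_of_prefix (List.prefix_append a y)
          (hmy ▸ List.prefix_append b _) with h | h
      · exact hX.2.2 a ha b hb h
      · exact (hX.2.2 b hb a ha h).symm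
    subst hab
    exact ⟨m, fun u hu => hm u (List.mem_cons_of_mem _ hu), List.append_cancel_left hmy⟩

theorem IsPrefixCode.inStar_of_append (hX : IsPrefixCode X) {x z : List A} (hx : InStar X x)
    (hxz : InStar X (x ++ z)) : InStar X z := by
  obtain ⟨l, hl, rfl⟩ := hx
  induction l with
  | nil => simpa using hxz
  | cons a l ih =>
    rw [List.flatten_cons, List.append_assoc] at hxz
    exact ih (fun u hu => hl u (List.mem_cons_of_mem _ hu))
      (hX.inStar_of_mem_append (hl a List.mem_cons_self) hxz)

theorem exists_inStar_append (hX : ∀ x ∈ X, x ≠ []) (r : List A) :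
    ∃ x u, InStar X x ∧ (¬ ∃ s ∈ X, s <+: u) ∧ x ++ u = r := by
  by_cases h : ∃ s ∈ X, s <+: r
  · obtain ⟨s, hs, t, rfl⟩ := h
    have : t.length < (s ++ t).length := by
      simp [List.length_pos_iff.mpr (hX s hs)]
    obtain ⟨x, u, hx, hu, rfl⟩ := exists_inStar_append hX t
    exact ⟨s ++ x, u, (inStar_of_mem hs).append hx, hu, by simp⟩
  · exact ⟨[], r, inStar_nil, h, rfl⟩
termination_by r.length

theorem IsPrefixCode.eq_of_append_eq_of_prefix (hX : IsPrefixCode X) {x x' u u' : List A}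
    (hx : InStar X x) (hx' : InStar X x') (hu : ¬ ∃ s ∈ X, s <+: u)
    (h : x ++ u = x' ++ u') (hxx' : x <+: x') : x = x' := by
  obtain ⟨z, rfl⟩ := hxx'
  rw [List.append_assoc] at h
  obtain rfl : u = z ++ u' := List.append_cancel_left h
  rcases eq_or_ne z [] with rfl | hz
  · simp
  · obtain ⟨s, hs, hsz⟩ := (hX.inStar_of_append hx hx').exists_prefix_mem hz
    exact absurd ⟨s, hs, hsz.trans (List.prefix_append _ _)⟩ hu

theorem IsPrefixCode.eq_of_append_eq (hX : IsPrefixCode X) {x x' u u' : List A}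
    (hx : InStar X x) (hx' : InStar X x') (hu : ¬ ∃ s ∈ X, s <+: u)
    (hu' : ¬ ∃ s ∈ X, s <+: u') (h : x ++ u = x' ++ u') : x = x' := by
  rcases List.prefix_or_prefix_of_prefix (h ▸ List.prefix_append x u)
      (List.prefix_append x' u') with hxx' | hx'x
  · exact hX.eq_of_append_eq_of_prefix hx hx' hu h hxx'
  · exact (hX.eq_of_append_eq_of_prefix hx' hx hu' h.symm hx'x).symm

def noSuffixPrefixes (X : Set (List A)) (w : List A) : Set (List A) :=
  {v | v <+: w ∧ ¬ ∃ s ∈ X, s <:+ v}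

theorem noSuffixPrefixes_finite (X : Set (List A)) (w : List A) :
    (noSuffixPrefixes X w).Finite :=
  w.inits.finite_toSet.subset fun v hv => (List.mem_inits v w).mpr hv.1

theorem delta_eq_ncard_noSuffixPrefixes (hX : IsPrefixCode X) (w : List A) :
    delta X w = (noSuffixPrefixes X w).ncard := by
  have hinj : Set.InjOn Prod.fst {p | IsParse X w p} := by
    rintro ⟨v, x, u⟩ ⟨hp, -, hx, hu⟩ ⟨v', x', u'⟩ ⟨hq, -, hx', hu'⟩ (rfl : v = v')
    have hxu : x ++ u = x' ++ u' := by
      rw [← hq, List.append_assoc] at hp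
      exact List.append_cancel_left (hp.trans (List.append_assoc _ _ _))
    obtain rfl := hX.eq_of_append_eq hx hx' hu hu' hxu
    rw [List.append_cancel_left hxu]
  have himage : Prod.fst '' {p | IsParse X w p} = noSuffixPrefixes X w := by
    ext v
    constructor
    · rintro ⟨⟨v, x, u⟩, ⟨rfl, hv, -⟩, rfl⟩
      exact ⟨⟨x ++ u, (List.append_assoc _ _ _).symm⟩, hv⟩
    · rintro ⟨⟨r, rfl⟩, hv⟩
      obtain ⟨x, u, hx, hu, rfl⟩ := exists_inStar_append hX.2.1 r
      exact ⟨(v, x, u), ⟨List.append_assoc _ _ _, hv, hx, hu⟩, rfl⟩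
  rw [delta, ← hinj.ncard_image, himage]

theorem IsSuffixCode.reverse (hX : IsSuffixCode X) : IsPrefixCode (List.reverse ⁻¹' X) := by
  obtain ⟨⟨x, hx⟩, hne, hcode⟩ := hX
  refine ⟨⟨x.reverse, by simpa⟩, fun w hw => by simpa using hne _ hw, fun u hu v hv huv => ?_⟩
  simpa using hcode _ hu _ hv (List.reverse_suffix.mpr huv)

theorem InStar.reverse {z : List A} (hz : InStar X z) : InStar (List.reverse ⁻¹' X) z.reverse := by
  obtain ⟨l, hl, rfl⟩ := hz
  refine ⟨(l.map List.reverse).reverse, fun a ha => ?_, by simp [List.reverse_flatten]⟩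
  obtain ⟨b, hb, rfl⟩ := List.mem_map.mp (List.mem_reverse.mp ha)
  simpa using hl b hb

theorem IsParse.reverse {w v x u : List A} (h : IsParse X w (v, x, u)) :
    IsParse (List.reverse ⁻¹' X) w.reverse (u.reverse, x.reverse, v.reverse) := by
  obtain ⟨rfl, hv, hx, hu⟩ := h
  refine ⟨by simp, fun ⟨s, hs, hsu⟩ => hu ⟨s.reverse, hs, ?_⟩, hx.reverse,
    fun ⟨s, hs, hsv⟩ => hv ⟨s.reverse, hs, ?_⟩⟩
  · exact List.reverse_suffix.mp (by simpa using hsu)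
  · exact List.reverse_prefix.mp (by simpa using hsv)

theorem delta_reverse (X : Set (List A)) (w : List A) :
    delta X w = delta (List.reverse ⁻¹' X) w.reverse := by
  refine Set.ncard_congr (fun p _ => (p.2.2.reverse, p.2.1.reverse, p.1.reverse))
    (fun _ hp => IsParse.reverse hp) (fun p q _ _ h => ?_) (fun q hq => ?_)
  · simp only [Prod.mk.injEq, List.reverse_inj] at h
    exact Prod.ext h.2.2 (Prod.ext h.2.1 h.1)
  · have := IsParse.reverse hq
    simp only [List.reverse_reverse, Set.preimage_preimage, Set.preimage_id'] at this
    exact ⟨_, this, by simp⟩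

def SuffixIncomparable (X : Set (List A)) (y : List A) : Prop :=
  ∀ x ∈ X, ¬ x <:+ y ∧ ¬ y <:+ x

def PrefixIncomparable (X : Set (List A)) (y : List A) : Prop :=
  ∀ x ∈ X, ¬ x <+: y ∧ ¬ y <+: x

theorem SuffixIncomparable.of_suffix {ζ y : List A} (h : SuffixIncomparable X ζ)
    (hζy : ζ <:+ y) : SuffixIncomparable X y := fun x hx =>
  ⟨fun hxy => (List.suffix_or_suffix_of_suffix hxy hζy).elim (h x hx).1 (h x hx).2,
    fun hyx => (h x hx).2 (hζy.trans hyx)⟩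

theorem PrefixIncomparable.of_prefix {ζ y : List A} (h : PrefixIncomparable X ζ)
    (hζy : ζ <+: y) : PrefixIncomparable X y := fun x hx =>
  ⟨fun hxy => (List.prefix_or_prefix_of_prefix hxy hζy).elim (h x hx).1 (h x hx).2,
    fun hyx => (h x hx).2 (hζy.trans hyx)⟩

theorem IsSuffixCode.insert {y : List A} (hX : IsSuffixCode X) (hy : SuffixIncomparable X y) :
    IsSuffixCode (insert y X) := by
  obtain ⟨⟨x₀, hx₀⟩, hne, hcode⟩ := hX
  have hy0 : y ≠ [] := fun h => (hy x₀ hx₀).2 (h ▸ List.nil_suffix)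
  refine ⟨Set.insert_nonempty y X, fun w hw => hw.elim (· ▸ hy0) (hne w), ?_⟩
  rintro u (rfl | hu) v (rfl | hv) huv
  exacts [rfl, ((hy v hv).2 huv).elim, ((hy u hu).1 huv).elim, hcode u hu v hv huv]

theorem IsPrefixCode.insert {y : List A} (hX : IsPrefixCode X) (hy : PrefixIncomparable X y) :
    IsPrefixCode (insert y X) := by
  obtain ⟨⟨x₀, hx₀⟩, hne, hcode⟩ := hX
  have hy0 : y ≠ [] := fun h => (hy x₀ hx₀).2 (h ▸ List.nil_prefix)
  refine ⟨Set.insert_nonempty y X, fun w hw => hw.elim (· ▸ hy0) (hne w), ?_⟩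
  rintro u (rfl | hu) v (rfl | hv) huv
  exacts [rfl, ((hy v hv).2 huv).elim, ((hy u hu).1 huv).elim, hcode u hu v hv huv]

theorem IsSuffixCode.suffixIncomparable_of_mem_diff {Y : Set (List A)} {y : List A}
    (hY : IsSuffixCode Y) (hXY : X ⊆ Y) (hy : y ∈ Y) (hyX : y ∉ X) :
    SuffixIncomparable X y := fun x hx =>
  ⟨fun hxy => hyX (hY.2.2 x (hXY hx) y hy hxy ▸ hx),
    fun hyx => hyX ((hY.2.2 y hy x (hXY hx) hyx).symm ▸ hx)⟩

theorem _root_.Set.exists_rel_map_eq_of_ncard_lt {α C : Type*} [Finite C] {S : Set α}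
    {r : α → α → Prop} (htot : ∀ x ∈ S, ∀ y ∈ S, x ≠ y → r x y ∨ r y x) (κ : α → C)
    (hS : Nat.card C < S.ncard) : ∃ x ∈ S, ∃ y ∈ S, r x y ∧ κ x = κ y := by
  obtain ⟨x, hx, y, hy, hxy, hκ⟩ := Set.exists_ne_map_eq_of_ncard_lt_of_maps_to
    (t := Set.univ) (by rwa [Set.ncard_univ]) (fun a _ => Set.mem_univ (κ a))
  rcases htot x hx y hy hxy with h | h
  exacts [⟨x, hx, y, hy, h, hκ⟩, ⟨y, hy, x, hx, h, hκ.symm⟩]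

theorem IsPrefixCode.exists_suffixIncomparable_infix (hX : IsPrefixCode X) {C : Type*} [Finite C]
    (κ : List A → C) (hκ : ∀ u v, κ u = κ v → ∀ α, α ++ u ∈ X ↔ α ++ v ∈ X) {w : List A}
    (hw : Nat.card C < delta X w) : ∃ ζ, ζ <:+: w ∧ SuffixIncomparable X ζ := by
  rw [delta_eq_ncard_noSuffixPrefixes hX] at hw
  have htot : ∀ v ∈ noSuffixPrefixes X w, ∀ v' ∈ noSuffixPrefixes X w, v ≠ v' →
      (∃ t ≠ [], v' = v ++ t) ∨ (∃ t ≠ [], v = v' ++ t) := by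
    rintro v ⟨hv, -⟩ v' ⟨hv', -⟩ hne
    rcases List.prefix_or_prefix_of_prefix hv hv' with ⟨t, rfl⟩ | ⟨t, rfl⟩
    · exact .inl ⟨t, by rintro rfl; simp at hne, rfl⟩
    · exact .inr ⟨t, by rintro rfl; simp at hne, rfl⟩
  obtain ⟨u, -, _, ⟨hζw, hζ⟩, ⟨t, ht, rfl⟩, hκu⟩ := Set.exists_rel_map_eq_of_ncard_lt htot κ hw
  refine ⟨u ++ t, hζw.isInfix, fun x hx => ⟨fun hxζ => hζ ⟨x, hx, hxζ⟩, ?_⟩⟩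
  rintro ⟨α, rfl⟩
  have hαu : α ++ u ∈ X := (hκ _ _ hκu α).mpr hx
  have := congrArg List.length (hX.2.2 _ hαu _ hx (by simp))
  simp [List.length_eq_zero_iff.not.mpr ht] at this

theorem IsSuffixCode.exists_prefixIncomparable_infix (hX : IsSuffixCode X) {C : Type*} [Finite C]
    (κ : List A → C) (hκ : ∀ u v, κ u = κ v → ∀ β, u ++ β ∈ X ↔ v ++ β ∈ X) {w : List A}
    (hw : Nat.card C < delta X w) : ∃ ζ, ζ <:+: w ∧ PrefixIncomparable X ζ := by
  rw [delta_reverse] at hw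
  obtain ⟨ζ, hζw, hζ⟩ := hX.reverse.exists_suffixIncomparable_infix (κ ∘ List.reverse)
    (fun u v huv α => by simpa using hκ _ _ huv α.reverse) hw
  refine ⟨ζ.reverse, by simpa using List.reverse_infix.mpr hζw, fun x hx => ?_⟩
  obtain ⟨hxζ, hζx⟩ := hζ x.reverse (by simpa)
  exact ⟨fun h => hxζ (by simpa using List.reverse_suffix.mpr h),
    fun h => hζx (by simpa using List.reverse_suffix.mpr h)⟩

theorem fdeg_eq_top_iff {F : Set (List A)} :
    Fdeg X F = ⊤ ↔ ∀ n : ℕ, ∃ w ∈ F, n < delta X w := by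
  rw [Fdeg, iSup₂_eq_top]
  refine ⟨fun h n => ?_, fun h b hb => ?_⟩
  · obtain ⟨w, hw, hlt⟩ := h n (ENat.natCast_lt_top n)
    exact ⟨w, hw, by exact_mod_cast hlt⟩
  · lift b to ℕ using hb.ne
    obtain ⟨w, hw, hlt⟩ := h b
    exact ⟨w, hw, by exact_mod_cast hlt⟩

theorem _root_.DFA.mem_accepts_iff_of_evalFrom_eq {α σ : Type*} (M : DFA α σ) {u v : List α}
    (huv : (fun q => M.evalFrom q u) = fun q => M.evalFrom q v) (x y : List α) :
    x ++ u ++ y ∈ M.accepts ↔ x ++ v ++ y ∈ M.accepts := by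
  simp only [DFA.mem_accepts, DFA.eval, DFA.evalFrom_of_append, congrFun huv]

theorem exists_lt_ncard_noSuffixPrefixes {F : Set (List A)} (hF : Recurrent F) {y : List A}
    (hyF : y ∈ F) (hy : y ≠ []) (hinc : SuffixIncomparable X y) (n : ℕ) :
    ∃ z ∈ F, n < (noSuffixPrefixes X z).ncard := by
  induction n with
  | zero =>
    refine ⟨y, hyF, Set.ncard_pos (noSuffixPrefixes_finite X y) |>.mpr
      ⟨y, List.prefix_refl y, fun ⟨x, hx, hxy⟩ => (hinc x hx).1 hxy⟩⟩
  | succ n ih =>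
    obtain ⟨z, hzF, hz⟩ := ih
    obtain ⟨s, hz'F⟩ := hF.2.2.2 z hzF y hyF
    refine ⟨z ++ s ++ y, hz'F, ?_⟩
    have hz' : z ++ s ++ y ∉ noSuffixPrefixes X z := fun h => by
      have := h.1.length_le
      simp only [List.length_append] at this
      exact hy (List.length_eq_zero_iff.mp (by omega))
    have hsub :
        insert (z ++ s ++ y) (noSuffixPrefixes X z) ⊆ noSuffixPrefixes X (z ++ s ++ y) := by
      refine Set.insert_subset ⟨List.prefix_refl _, fun ⟨x, hx, hxz⟩ =>
        ((hinc.of_suffix (List.suffix_append _ _)) x hx).1 hxz⟩ fun v hv => ⟨?_, hv.2⟩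
      exact hv.1.trans (by simp [List.append_assoc])
    calc n + 1 < (noSuffixPrefixes X z).ncard + 1 := by omega
      _ = (insert (z ++ s ++ y) (noSuffixPrefixes X z)).ncard :=
        (Set.ncard_insert_of_notMem hz' (noSuffixPrefixes_finite X z)).symm
      _ ≤ _ := Set.ncard_le_ncard hsub (noSuffixPrefixes_finite X _)

theorem fdeg_eq_top_of_not_isFMaximalBifixCode {F : Set (List A)} (hF : Recurrent F)
    (hX : IsBifixCode X) (hXF : X ⊆ F) (hnmax : ¬ IsFMaximalBifixCode F X) : Fdeg X F = ⊤ := by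
  obtain ⟨Y, hY, hYF, hXY, hYX⟩ : ∃ Y, IsBifixCode Y ∧ Y ⊆ F ∧ X ⊆ Y ∧ Y ≠ X := by
    simpa [IsFMaximalBifixCode, hX, hXF] using hnmax
  obtain ⟨y, hyY, hyX⟩ := Set.exists_of_ssubset (hXY.ssubset_of_ne hYX.symm)
  have hinc := hY.2.suffixIncomparable_of_mem_diff hXY hyY hyX
  refine fdeg_eq_top_iff.mpr fun n => ?_
  obtain ⟨z, hzF, hz⟩ := exists_lt_ncard_noSuffixPrefixes hF (hYF hyY) (hY.1.2.1 y hyY) hinc n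
  exact ⟨z, hzF, delta_eq_ncard_noSuffixPrefixes hX.1 z ▸ hz⟩

theorem fdeg_ne_top_of_isFMaximalBifixCode {F : Set (List A)} (hF : Recurrent F)
    (hrat : IsRational X) (hmax : IsFMaximalBifixCode F X) : Fdeg X F ≠ ⊤ := by
  obtain ⟨⟨hXp, hXs⟩, hXF, hmax⟩ := hmax
  obtain ⟨σ, _, M, hM⟩ := hrat
  have hκ (u v : List A) (huv : (fun q => M.evalFrom q u) = fun q => M.evalFrom q v)
      (x y : List A) : x ++ u ++ y ∈ X ↔ x ++ v ++ y ∈ X := by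
    simpa only [hM] using M.mem_accepts_iff_of_evalFrom_eq huv x y
  intro htop
  obtain ⟨w, hwF, hw⟩ := fdeg_eq_top_iff.mp htop (Nat.card (σ → σ))
  obtain ⟨ζ, hζw, hζ⟩ := hXp.exists_suffixIncomparable_infix (fun u q => M.evalFrom q u)
    (fun u v huv α => by simpa using hκ u v huv α []) hw
  obtain ⟨ζ', hζ'w, hζ'⟩ := hXs.exists_prefixIncomparable_infix (fun u q => M.evalFrom q u)
    (fun u v huv β => by simpa using hκ u v huv [] β) hw
  obtain ⟨s, hyF⟩ := hF.2.2.2 ζ' (hF.1 w hwF ζ' hζ'w) ζ (hF.1 w hwF ζ hζw)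
  have hys : SuffixIncomparable X (ζ' ++ s ++ ζ) := hζ.of_suffix (List.suffix_append _ _)
  have hyp : PrefixIncomparable X (ζ' ++ s ++ ζ) := hζ'.of_prefix (by simp [List.append_assoc])
  have hins := hmax _ ⟨hXp.insert hyp, hXs.insert hys⟩ (Set.insert_subset hyF hXF)
    (Set.subset_insert _ X)
  exact (hys _ (hins ▸ Set.mem_insert _ X)).1 (List.suffix_refl _)

end PaperDefs

open PaperDefs in
theorem stmt_3_general {A : Type}
    (F X : Set (List A)) (hF : Recurrent F)
    (hX : IsBifixCode X) (hXF : X ⊆ F) (hrat : IsRational X) :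
    Fdeg X F ≠ ⊤ ↔ IsFMaximalBifixCode F X :=
  ⟨fun hfin => by_contra fun hnmax =>
      hfin (fdeg_eq_top_of_not_isFMaximalBifixCode hF hX hXF hnmax),
    fdeg_ne_top_of_isFMaximalBifixCode hF hrat⟩

open PaperDefs in
theorem stmt_3 {A : Type} [Fintype A]
    (F X : Set (List A)) (hF : Recurrent F)
    (hX : IsBifixCode X) (hXF : X ⊆ F) (hrat : IsRational X) :
    Fdeg X F ≠ ⊤ ↔ IsFMaximalBifixCode F X :=
  stmt_3_general F X hF hX hXF hrat
end

section
/- Let A be a finite alphabet, let F ⊆ A* be a factorial set, and let X be a rational subset of F whose F-degree d = d_F(X) is finite. Then there exist a finite monoid M and a monoid homomorphism φ : A* → M such that for all u, v ∈ F, φ(u) = φ(v) implies δ_X(u) = δ_X(v). (Equivalently, the map δ_X : F → {1, …, d} is uniformly continuous with respect to the profinite uniformity on A*, i.e., it extends continuously to the closure of F in the free profinite monoid over A, with {1, …, d} discrete.) -/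
/-!
Let `L₁`, `L₂`, `L₃` be the words with no suffix in `X`, the language `X*`, and the words with no
prefix in `X`. All three are regular when `X` is (by Myhill–Nerode, each of their left quotients
is assembled from a finite set of left quotients of `X`), and `δ_X(w)` counts the factorizations
`w = v x u` with `v ∈ L₁`, `x ∈ L₂`, `u ∈ L₃`; so `δ_X` is a Cauchy product of characteristic
series of regular languages, hence an `ℕ`-recognizable series `w ↦ α μ(w) β`. Reducing the matrices
`μ(w)` modulo the congruence of `ℕ` that identifies all integers `≥ d` gives a morphism into a
finite monoid which determines `min (δ_X w) d`, and this is `δ_X w` on `F`.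
-/

open PaperDefs Computability Matrix Finset

namespace Language

variable {α : Type*} {K L : Language α}

theorem leftQuotient_mul (u : List α) :
    (K * L).leftQuotient u =
      K.leftQuotient u * L + ⨆ y ∈ {y | ∃ x ∈ K, x ++ y = u}, L.leftQuotient y := by
  ext w
  simp only [mem_leftQuotient, mem_mul, mem_add, mem_iSup]
  constructor
  · rintro ⟨a, ha, b, hb, hab⟩
    rcases List.append_eq_append_iff.1 hab with ⟨c, rfl, rfl⟩ | ⟨c, rfl, rfl⟩
    · exact Or.inr ⟨c, ⟨a, ha, rfl⟩, hb⟩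
    · exact Or.inl ⟨c, ha, b, hb, rfl⟩
  · rintro (⟨a, ha, b, hb, rfl⟩ | ⟨y, ⟨x, hx, rfl⟩, hy⟩)
    · exact ⟨u ++ a, ha, b, hb, List.append_assoc _ _ _⟩
    · exact ⟨x, hx, y ++ w, hy, (List.append_assoc _ _ _).symm⟩

theorem IsRegular.mul (hK : K.IsRegular) (hL : L.IsRegular) : (K * L).IsRegular := by
  rw [isRegular_iff_finite_range_leftQuotient] at *
  refine ((hK.prod hL.finite_subsets).image
    fun p => p.1 * L + ⨆ q ∈ p.2, q).subset ?_
  rintro _ ⟨u, rfl⟩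
  refine ⟨(K.leftQuotient u, L.leftQuotient '' {y | ∃ x ∈ K, x ++ y = u}),
    ⟨Set.mem_range_self u, Set.image_subset_range _ _⟩, ?_⟩
  simp only [iSup_image, leftQuotient_mul]

theorem append_mem_kstar {x y : List α} (hx : x ∈ L∗) (hy : y ∈ L∗) : x ++ y ∈ L∗ := by
  rw [← kstar_mul_kstar L]
  exact append_mem_mul hx hy

theorem mem_kstar_of_mem {x : List α} (hx : x ∈ L) : x ∈ L∗ := by
  simpa using join_mem_kstar (L := [x]) (by simpa using hx)

theorem leftQuotient_kstar (u : List α) :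
    L∗.leftQuotient u =
      (⨆ y ∈ {y | ∃ x ∈ L∗, x ++ y = u}, L.leftQuotient y * L∗) + ⨆ (_ : u ∈ L∗), L∗ := by
  ext w
  simp only [mem_leftQuotient, mem_add, mem_iSup]
  constructor
  · rw [mem_kstar]
    rintro ⟨S, hS, hSL⟩
    induction S generalizing u with
    | nil =>
      obtain ⟨rfl, rfl⟩ := List.append_eq_nil_iff.1 hS
      exact Or.inr ⟨nil_mem_kstar L, nil_mem_kstar L⟩
    | cons s S ih =>
      have hsL : s ∈ L := hSL s List.mem_cons_self
      have hSL' : ∀ y ∈ S, y ∈ L := fun y hy => hSL y (List.mem_cons_of_mem s hy)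
      rw [List.flatten_cons] at hS
      rcases List.append_eq_append_iff.1 hS with ⟨c, rfl, rfl⟩ | ⟨c, rfl, hc⟩
      · exact Or.inl ⟨u, ⟨[], nil_mem_kstar L, rfl⟩, mem_mul.2
          ⟨c, hsL, S.flatten, join_mem_kstar hSL', rfl⟩⟩
      · rcases ih c hc.symm hSL' with ⟨y, ⟨x, hx, rfl⟩, hy⟩ | ⟨hc, hw⟩
        · exact Or.inl ⟨y, ⟨s ++ x, append_mem_kstar (mem_kstar_of_mem hsL) hx,
            List.append_assoc _ _ _⟩, hy⟩
        · exact Or.inr ⟨append_mem_kstar (mem_kstar_of_mem hsL) hc, hw⟩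
  · rintro (⟨y, ⟨x, hx, rfl⟩, hw⟩ | ⟨hu, hw⟩)
    · obtain ⟨a, ha, b, hb, rfl⟩ := mem_mul.1 hw
      simpa using append_mem_kstar hx (append_mem_kstar (mem_kstar_of_mem ha) hb)
    · exact append_mem_kstar hu hw

theorem IsRegular.kstar (hL : L.IsRegular) : L∗.IsRegular := by
  rw [isRegular_iff_finite_range_leftQuotient] at *
  refine ((hL.finite_subsets.prod (Set.finite_univ (α := Prop))).image
    fun p => (⨆ q ∈ p.1, q * L∗) + ⨆ (_ : p.2), L∗).subset ?_
  rintro _ ⟨u, rfl⟩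
  refine ⟨(L.leftQuotient '' {y | ∃ x ∈ L∗, x ++ y = u}, u ∈ L∗),
    ⟨Set.image_subset_range _ _, Set.mem_univ _⟩, ?_⟩
  simp only [iSup_image, leftQuotient_kstar]

theorem isRegular_top : (⊤ : Language α).IsRegular := by
  rw [isRegular_iff_finite_range_leftQuotient]
  refine (Set.finite_singleton ⊤).subset ?_
  rintro _ ⟨u, rfl⟩
  exact Set.eq_univ_of_forall fun _ => trivial

end Language

section Series

open scoped Classical

variable {A : Type*}

def IsNatRecognizable (f : List A → ℕ) : Prop :=
  ∃ (n : Type) (_ : Fintype n) (_ : DecidableEq n) (α β : n → ℕ) (μ : A → Matrix n n ℕ),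
    ∀ w, f w = α ⬝ᵥ (w.map μ).prod *ᵥ β

def cauchyProduct (f g : List A → ℕ) (w : List A) : ℕ :=
  ∑ i ∈ range (w.length + 1), f (w.take i) * g (w.drop i)

def DFA.transitionMatrix {σ : Type*} [DecidableEq σ] (M : DFA A σ) (a : A) : Matrix σ σ ℕ :=
  of fun p q => if M.step p a = q then 1 else 0

theorem DFA.prod_map_transitionMatrix {σ : Type*} [Fintype σ] [DecidableEq σ] (M : DFA A σ)
    (w : List A) :
    (w.map M.transitionMatrix).prod = of fun p q => if M.evalFrom p w = q then 1 else 0 := by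
  induction w with
  | nil => ext p q; by_cases h : p = q <;> simp [h, one_apply]
  | cons a w ih =>
    ext p q
    simp only [List.map_cons, List.prod_cons, ih, DFA.transitionMatrix, mul_apply, of_apply,
      ite_mul, one_mul,
      zero_mul, sum_ite_eq, mem_univ, if_true, DFA.evalFrom_cons]
    rfl

theorem Language.IsRegular.isNatRecognizable_indicator {L : Language A} (hL : L.IsRegular) :
    IsNatRecognizable fun w => if w ∈ L then 1 else 0 := by
  obtain ⟨σ, _, M, rfl⟩ := hL
  refine ⟨σ, inferInstance, inferInstance, Pi.single M.start 1,
    fun q => if q ∈ M.accept then 1 else 0, M.transitionMatrix, fun w => ?_⟩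
  rw [M.prod_map_transitionMatrix, single_dotProduct, one_mul]
  simp only [mulVec, dotProduct, of_apply, ite_mul, one_mul, zero_mul, sum_ite_eq, mem_univ,
    if_true]
  rfl

theorem IsNatRecognizable.cauchyProduct {f g : List A → ℕ} (hf : IsNatRecognizable f)
    (hg : IsNatRecognizable g) : IsNatRecognizable (cauchyProduct f g) := by
  obtain ⟨n, _, _, α, β, μ, hf⟩ := hf
  obtain ⟨m, _, _, α', β', ν, hg⟩ := hg
  let κ : A → Matrix (n ⊕ m) (n ⊕ m) ℕ := fun a => fromBlocks (μ a) (vecMulVec β α' * ν a) 0 (ν a)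
  -- the off-diagonal block lets a run leave the automaton of `f` (output weight `β`) and enter
  -- that of `g` (input weight `α'`) just before reading `a`
  have key : ∀ w : List A, (w.map κ).prod *ᵥ Sum.elim (g [] • β) β' =
      Sum.elim (∑ i ∈ range (w.length + 1), g (w.drop i) • ((w.take i).map μ).prod *ᵥ β)
        ((w.map ν).prod *ᵥ β') := by
    intro w
    induction w with
    | nil => simp
    | cons a w ih =>
      have hcut : (vecMulVec β α' * ν a) *ᵥ ((w.map ν).prod *ᵥ β') = g (a :: w) • β := by
        rw [hg, List.map_cons, List.prod_cons, ← mulVec_mulVec, ← mulVec_mulVec,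
          vecMulVec_mulVec, op_smul_eq_smul]
      rw [List.map_cons, List.prod_cons, ← mulVec_mulVec, ih, fromBlocks_mulVec, List.length_cons,
        sum_range_succ' _ (w.length + 1)]
      simp only [Function.comp_def, Sum.elim_inl, Sum.elim_inr, zero_mulVec, zero_add,
        mulVec_mulVec, hcut, mulVec_sum, mulVec_smul, List.map_cons, List.prod_cons,
        List.drop_succ_cons, List.take_succ_cons, List.drop_zero, List.take_zero, List.map_nil,
        List.prod_nil, one_mulVec, Matrix.zero_mul, smul_zero, sum_const_zero]
  refine ⟨n ⊕ m, inferInstance, inferInstance, Sum.elim α 0, Sum.elim (g [] • β) β', κ,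
    fun w => ?_⟩
  rw [key, sumElim_dotProduct_sumElim, zero_dotProduct, add_zero, dotProduct_sum,
    _root_.cauchyProduct]
  refine sum_congr rfl fun i _ => ?_
  rw [dotProduct_smul, hf, smul_eq_mul, mul_comm]

theorem Nat.min_mul_min_left (a c N : ℕ) : min (min a N * c) N = min (a * c) N := by
  rcases le_total a N with h | h
  · rw [min_eq_left h]
  rcases Nat.eq_zero_or_pos c with rfl | hc
  · simp
  rw [min_eq_right h, min_eq_right (Nat.le_mul_of_pos_right N hc),
    min_eq_right (h.trans (Nat.le_mul_of_pos_right a hc))]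

def thresholdCon (N : ℕ) : RingCon ℕ where
  r a b := min a N = min b N
  iseqv := ⟨fun _ => rfl, Eq.symm, Eq.trans⟩
  add' := by intros; omega
  mul' {a b c d} hab hcd := by
    rw [← Nat.min_mul_min_left, hab, Nat.min_mul_min_left, mul_comm, ← Nat.min_mul_min_left, hcd,
      Nat.min_mul_min_left, mul_comm]

instance thresholdCon.instFiniteQuotient (N : ℕ) : Finite (thresholdCon N).Quotient := by
  refine Finite.of_surjective (fun i : Fin (N + 1) => ((i : ℕ) : (thresholdCon N).Quotient)) ?_
  rintro ⟨k⟩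
  refine ⟨⟨min k N, by omega⟩, (RingCon.eq _).2 ?_⟩
  show min (min k N) N = min k N
  omega

theorem IsNatRecognizable.exists_finiteMonoidHom_min_eq {f : List A → ℕ}
    (hf : IsNatRecognizable f) (N : ℕ) :
    ∃ W : FiniteMonoidHomWitness A, ∀ u v, W.φ u = W.φ v → min (f u) N = min (f v) N := by
  obtain ⟨n, _, _, α, β, μ, hf⟩ := hf
  let ψ := (thresholdCon N).mk'
  have hψ : ∀ w, ψ (f w) = (ψ ∘ α) ⬝ᵥ ψ.mapMatrix (w.map μ).prod *ᵥ (ψ ∘ β) := by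
    intro w
    rw [hf, RingHom.map_dotProduct]
    congr 1
    funext i
    exact RingHom.map_mulVec _ _ _ _
  refine ⟨{ M := Matrix n n (thresholdCon N).Quotient
            fin := Fintype.ofFinite _
            φ := fun w => ψ.mapMatrix (w.map μ).prod
            map_nil := map_one _
            map_append := fun u v => by rw [List.map_append, List.prod_append, map_mul] },
    fun u v huv => ?_⟩
  have : ψ (f u) = ψ (f v) := by rw [hψ, hψ]; exact congrArg (fun P => (ψ ∘ α) ⬝ᵥ P *ᵥ (ψ ∘ β)) huv
  exact (RingCon.eq _).1 this

theorem ncard_factorizations (L₁ L₂ L₃ : Language A) (w : List A) :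
    {p : List A × List A × List A |
        p.1 ++ p.2.1 ++ p.2.2 = w ∧ p.1 ∈ L₁ ∧ p.2.1 ∈ L₂ ∧ p.2.2 ∈ L₃}.ncard =
      cauchyProduct (cauchyProduct (fun x => if x ∈ L₁ then 1 else 0)
        (fun x => if x ∈ L₂ then 1 else 0)) (fun x => if x ∈ L₃ then 1 else 0) w := by
  set T := {p : List A × List A × List A |
    p.1 ++ p.2.1 ++ p.2.2 = w ∧ p.1 ∈ L₁ ∧ p.2.1 ∈ L₂ ∧ p.2.2 ∈ L₃}
  -- `⟨j, i⟩` with `i ≤ j ≤ |w|` encodes the factorization `w = w[0,i) w[i,j) w[j,|w|)`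
  let g : (Σ _ : ℕ, ℕ) → List A × List A × List A := fun x =>
    ((w.take x.1).take x.2, (w.take x.1).drop x.2, w.drop x.1)
  let S := ((range (w.length + 1)).sigma fun j => range (j + 1)).filter (g · ∈ T)
  have hT : T = g '' S := by
    ext ⟨a, b, c⟩
    refine ⟨fun hp => ⟨⟨a.length + b.length, a.length⟩, ?_⟩, ?_⟩
    · have hlen : a.length + b.length = (a ++ b).length := List.length_append.symm
      have hg : g ⟨a.length + b.length, a.length⟩ = (a, b, c) := by
        simp only [g, ← hp.1, hlen, List.take_left, List.drop_left]
      refine ⟨mem_filter.2 ⟨mem_sigma.2 ⟨?_, ?_⟩, hg ▸ hp⟩, hg⟩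
      · simp [← hp.1]
      · simp
    · rintro ⟨x, hx, hgx⟩
      exact hgx ▸ (mem_filter.1 hx).2
  have hinj : Set.InjOn g S := by
    rintro ⟨j, i⟩ hx ⟨j', i'⟩ hy hxy
    simp only [S, coe_filter, Set.mem_ofPred_eq, mem_sigma, mem_range] at hx hy
    simp only [g, Prod.mk.injEq] at hxy
    have hi := congrArg List.length hxy.1
    have hj := congrArg List.length hxy.2.1
    simp only [List.length_take, List.length_drop] at hi hj
    obtain rfl : i = i' := by omega
    obtain rfl : j = j' := by omega
    rfl
  rw [hT, hinj.ncard_image, Set.ncard_coe_finset, card_filter, sum_sigma, cauchyProduct]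
  refine sum_congr rfl fun j hj => ?_
  have hlen : (w.take j).length = j := List.length_take_of_le (by simp at hj; omega)
  rw [cauchyProduct, hlen, sum_mul]
  refine sum_congr rfl fun i _ => ?_
  simp only [T, g, Set.mem_ofPred_eq, List.take_append_drop, true_and]
  split_ifs <;> simp_all

theorem delta_eq_cauchyProduct (X : Language A) (w : List A) :
    delta X w = cauchyProduct
      (cauchyProduct (fun v => if v ∈ (⊤ * X)ᶜ then 1 else 0) (fun x => if x ∈ X∗ then 1 else 0))
      (fun u => if u ∈ (X * ⊤)ᶜ then 1 else 0) w := by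
  unfold delta
  rw [← ncard_factorizations]
  congr 1
  ext ⟨v, x, u⟩
  refine and_congr Iff.rfl (and_congr (not_congr ?_) (and_congr ?_ (not_congr ?_)))
  · exact ⟨fun ⟨s, hs, t, ht⟩ => Language.mem_mul.2 ⟨t, trivial, s, hs, ht⟩,
      fun h => let ⟨t, _, s, hs, ht⟩ := Language.mem_mul.1 h; ⟨s, hs, t, ht⟩⟩
  · exact ⟨fun ⟨l, hl, h⟩ => Language.mem_kstar.2 ⟨l, h.symm, hl⟩,
      fun h => let ⟨l, h₁, h₂⟩ := Language.mem_kstar.1 h; ⟨l, h₂, h₁.symm⟩⟩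
  · exact ⟨fun ⟨s, hs, t, ht⟩ => Language.mem_mul.2 ⟨s, hs, t, trivial, ht⟩,
      fun h => let ⟨s, hs, t, _, ht⟩ := Language.mem_mul.1 h; ⟨s, hs, t, ht⟩⟩

theorem isNatRecognizable_delta {X : Language A} (hX : X.IsRegular) :
    IsNatRecognizable (delta X) := by
  rw [funext (delta_eq_cauchyProduct X)]
  exact (((Language.isRegular_top.mul hX).compl.isNatRecognizable_indicator).cauchyProduct
    hX.kstar.isNatRecognizable_indicator).cauchyProduct
    (hX.mul Language.isRegular_top).compl.isNatRecognizable_indicator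

theorem isRegular_of_isRational {X : Set (List A)} (hX : IsRational X) : Language.IsRegular X :=
  let ⟨σ, _, M, hM⟩ := hX
  ⟨σ, inferInstance, M, Set.ext hM⟩

theorem delta_le_of_fdeg_eq {X F : Set (List A)} {d : ℕ} (hd : Fdeg X F = d) {w : List A}
    (hw : w ∈ F) : delta X w ≤ d := by
  have : (delta X w : ℕ∞) ≤ Fdeg X F := le_iSup₂ (f := fun w (_ : w ∈ F) => (delta X w : ℕ∞)) w hw
  exact_mod_cast hd ▸ this

end Series

open PaperDefs in
theorem stmt_4_general {A : Type}
    (F X : Set (List A)) (hrat : IsRational X)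
    (d : ℕ) (hd : Fdeg X F = (d : ℕ∞)) :
    ∃ W : FiniteMonoidHomWitness A,
      ∀ u ∈ F, ∀ v ∈ F, W.φ u = W.φ v → delta X u = delta X v := by
  obtain ⟨W, hW⟩ :=
    (isNatRecognizable_delta (isRegular_of_isRational hrat)).exists_finiteMonoidHom_min_eq d
  refine ⟨W, fun u hu v hv huv => ?_⟩
  rw [← min_eq_left (delta_le_of_fdeg_eq hd hu), ← min_eq_left (delta_le_of_fdeg_eq hd hv)]
  exact hW u v huv

open PaperDefs in
theorem stmt_4 {A : Type} [Fintype A]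
    (F X : Set (List A)) (hF : Factorial F) (hXF : X ⊆ F) (hrat : IsRational X)
    (d : ℕ) (hd : Fdeg X F = (d : ℕ∞)) :
    ∃ W : FiniteMonoidHomWitness A,
      ∀ u ∈ F, ∀ v ∈ F, W.φ u = W.φ v → delta X u = delta X v :=
  stmt_4_general F X hrat d hd
end

section
/- Let φ : M → N be a homomorphism of monoids, and let e and f be idempotents of M that are D-equivalent. Let H_e and H_f be the maximal subgroups of M containing e and f respectively. Then φ(H_e) and φ(H_f) are isomorphic groups; moreover, φ(H_e) is a maximal subgroup of N (i.e., equals the H-class of the idempotent φ(e)) if and only if φ(H_f) is a maximal subgroup of N (i.e., equals the H-class of φ(f)). -/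
open PaperDefs

section GreenAux

variable {M : Type*} [Monoid M]

lemma memH_left {e x : M} (he : e * e = e) (hx : x ∈ HClass e) :
    e * x = x ∧ x * e = x := by
  obtain ⟨⟨⟨a, ha⟩, ⟨b, hb⟩⟩, ⟨⟨c, hc⟩, ⟨d, hd⟩⟩⟩ := hx
  constructor
  · rw [hb, ← mul_assoc, he]
  · rw [hd, mul_assoc, he]

lemma hmapAux {e f s t : M} (he : e * e = e) (hf : f * f = f)
    (hst : s * t = e) (hts : t * s = f) (hes : e * s = s) (hft : f * t = t)
    {x : M} (hx : x ∈ HClass e) : t * x * s ∈ HClass f := by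
  obtain ⟨hex, hxe⟩ := memH_left he hx
  obtain ⟨⟨⟨a, ha⟩, -⟩, ⟨⟨b, hb⟩, -⟩⟩ := hx
  have hsf : s * f = s := by rw [← hts, ← mul_assoc, hst, hes]
  have hxa : ∀ z, x * (a * z) = e * z := fun z => by rw [← mul_assoc, ← ha]
  have hbx : ∀ z, b * (x * z) = e * z := fun z => by rw [← mul_assoc, ← hb]
  have hst' : ∀ z, s * (t * z) = e * z := fun z => by rw [← mul_assoc, hst]
  have hex' : ∀ z, e * (x * z) = x * z := fun z => by rw [← mul_assoc, hex]
  have hxe' : ∀ z, x * (e * z) = x * z := fun z => by rw [← mul_assoc, hxe]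
  have hft' : ∀ z, f * (t * z) = t * z := fun z => by rw [← mul_assoc, hft]
  refine ⟨⟨⟨t * a * s, ?_⟩, ⟨t * x * s, ?_⟩⟩, ⟨⟨t * b * s, ?_⟩, ⟨t * x * s, ?_⟩⟩⟩
  · simp only [mul_assoc]
    rw [hst', hxe', hxa, hes, hts]
  · simp only [mul_assoc]
    rw [hft']
  · simp only [mul_assoc]
    rw [hst', hex', hbx, hes, hts]
  · simp only [mul_assoc]
    rw [hsf]

lemma green_main {N : Type*} [Monoid N] (φ : M →* N) {e f s t : M}
    (he : e * e = e) (hf : f * f = f)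
    (hst : s * t = e) (hts : t * s = f) (hes : e * s = s) (hft : f * t = t) :
    GroupIsoOn (φ '' HClass e) (φ '' HClass f) ∧
      (φ '' HClass e = HClass (φ e) → φ '' HClass f = HClass (φ f)) := by
  have hsf : s * f = s := by rw [← hts, ← mul_assoc, hst, hes]
  have hte : t * e = t := by rw [← hst, ← mul_assoc, hts, hft]
  -- forward and backward maps on M
  have hmapEF : ∀ x ∈ HClass e, t * x * s ∈ HClass f :=
    fun x hx => hmapAux he hf hst hts hes hft hx
  have hmapFE : ∀ y ∈ HClass f, s * y * t ∈ HClass e :=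
    fun y hy => hmapAux hf he hts hst hft hes hy
  have hinv1 : ∀ x : M, x ∈ HClass e → s * (t * x * s) * t = x := by
    intro x hx
    obtain ⟨hex, hxe⟩ := memH_left he hx
    simp only [mul_assoc]
    rw [hst, hxe, ← mul_assoc, hst, hex]
  have hinv2 : ∀ y : M, y ∈ HClass f → t * (s * y * t) * s = y := by
    intro y hy
    obtain ⟨hfy, hyf⟩ := memH_left hf hy
    simp only [mul_assoc]
    rw [hts, hyf, ← mul_assoc, hts, hfy]
  constructor
  · -- group isomorphism
    refine ⟨fun n => φ t * n * φ s, ⟨?_, ?_, ?_⟩, ?_⟩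
    · rintro _ ⟨x, hx, rfl⟩
      exact ⟨t * x * s, hmapEF x hx, by rw [map_mul, map_mul]⟩
    · rintro _ ⟨x, hx, rfl⟩ _ ⟨y, hy, rfl⟩ hxy
      have hxy' : φ t * φ x * φ s = φ t * φ y * φ s := hxy
      have hx' : φ s * (φ t * φ x * φ s) * φ t = φ x := by
        rw [show φ s * (φ t * φ x * φ s) * φ t = φ (s * (t * x * s) * t) by
          simp [map_mul, mul_assoc], hinv1 x hx]
      have hy' : φ s * (φ t * φ y * φ s) * φ t = φ y := by
        rw [show φ s * (φ t * φ y * φ s) * φ t = φ (s * (t * y * s) * t) by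
          simp [map_mul, mul_assoc], hinv1 y hy]
      show φ x = φ y
      rw [← hx', hxy', hy']
    · rintro _ ⟨y, hy, rfl⟩
      refine ⟨φ (s * y * t), ⟨s * y * t, hmapFE y hy, rfl⟩, ?_⟩
      show φ t * φ (s * y * t) * φ s = φ y
      rw [show φ t * φ (s * y * t) * φ s = φ (t * (s * y * t) * s) by
        simp [map_mul, mul_assoc], hinv2 y hy]
    · rintro _ ⟨x, hx, rfl⟩ _ ⟨y, hy, rfl⟩
      obtain ⟨hex, hxe⟩ := memH_left he hx
      have hM : t * (x * y) * s = (t * x * s) * (t * y * s) := by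
        simp only [mul_assoc]
        rw [← mul_assoc s t, hst, ← mul_assoc x e, hxe]
      calc φ t * (φ x * φ y) * φ s = φ (t * (x * y) * s) := by simp [map_mul, mul_assoc]
        _ = φ ((t * x * s) * (t * y * s)) := by rw [hM]
        _ = φ t * φ x * φ s * (φ t * φ y * φ s) := by simp [map_mul, mul_assoc]
  · -- transfer of maximality
    intro hEe
    have hfN : φ f * φ f = φ f := by rw [← map_mul, hf]
    have heN : φ e * φ e = φ e := by rw [← map_mul, he]
    have htsN : φ t * φ s = φ f := by rw [← map_mul, hts]
    have hstN : φ s * φ t = φ e := by rw [← map_mul, hst]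
    have hftN : φ f * φ t = φ t := by rw [← map_mul, hft]
    have hesN : φ e * φ s = φ s := by rw [← map_mul, hes]
    apply Set.Subset.antisymm
    · rintro _ ⟨y, hy, rfl⟩
      obtain ⟨⟨⟨a, ha⟩, ⟨b, hb⟩⟩, ⟨⟨c, hc⟩, ⟨d, hd⟩⟩⟩ := hy
      exact ⟨⟨⟨φ a, by rw [← map_mul, ← ha]⟩, ⟨φ b, by rw [← map_mul, ← hb]⟩⟩,
        ⟨⟨φ c, by rw [← map_mul, ← hc]⟩, ⟨φ d, by rw [← map_mul, ← hd]⟩⟩⟩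
    · intro n hn
      have h1 : φ s * n * φ t ∈ HClass (φ e) :=
        hmapAux hfN heN htsN hstN hftN hesN hn
      rw [← hEe] at h1
      obtain ⟨x, hx, hφx⟩ := h1
      obtain ⟨hfn, hnf⟩ := memH_left hfN hn
      refine ⟨t * x * s, hmapEF x hx, ?_⟩
      rw [map_mul, map_mul, hφx]
      simp only [mul_assoc]
      rw [htsN, hnf, ← mul_assoc, htsN, hfn]

end GreenAux

open PaperDefs in
theorem stmt_6 {M N : Type*} [Monoid M] [Monoid N] (φ : M →* N)
    (e f : M) (he : e * e = e) (hf : f * f = f) (hD : DEquiv e f) :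
    GroupIsoOn (φ '' HClass e) (φ '' HClass f) ∧
    ((φ '' HClass e = HClass (φ e)) ↔ (φ '' HClass f = HClass (φ f))) := by
  obtain ⟨s, ⟨⟨u, hu⟩, ⟨u', hu'⟩⟩, ⟨⟨v, hv⟩, ⟨v', hv'⟩⟩⟩ := hD
  set t := f * u' with ht
  have hes : e * s = s := by rw [hu, ← mul_assoc, he]
  have hsf : s * f = s := by rw [hv', mul_assoc, hf]
  have hst : s * t = e := by rw [ht, ← mul_assoc, hsf, ← hu']
  have hft : f * t = t := by rw [ht, ← mul_assoc, hf]
  have hts : t * s = f := by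
    rw [ht, hv]
    simp only [mul_assoc]
    rw [← mul_assoc s u' s, ← hu', hes]
  obtain ⟨hiso, himp⟩ := green_main φ he hf hst hts hes hft
  obtain ⟨-, himp'⟩ := green_main φ hf he hts hst hft hes
  exact ⟨hiso, ⟨himp, himp'⟩⟩
end

section
/- Let A be a finite alphabet, let F be a factorial subset of A*, and let X be a prefix code contained in F. Then X is an F-maximal prefix code if and only if X is right F-complete. -/
open PaperDefs in
theorem stmt_7 {A : Type} [Fintype A]
    (F X : Set (List A)) (hF : Factorial F)
    (hX : IsPrefixCode X) (hXF : X ⊆ F) :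
    IsFMaximalPrefixCode F X ↔ ∀ w ∈ F, ∃ z, InStar X z ∧ w <+: z := by
  constructor
  · rintro ⟨hpc, hsub, hmax⟩
    have key : ∀ n, ∀ w ∈ F, w.length ≤ n → ∃ z, InStar X z ∧ w <+: z := by
      intro n
      induction n with
      | zero =>
        intro w hw hlen
        refine ⟨[], ⟨[], by simp, rfl⟩, ?_⟩
        simp [List.length_eq_zero_iff.mp (Nat.le_zero.mp hlen)]
      | succ n ih =>
        intro w hw hlen
        by_cases hx1 : ∃ x ∈ X, x <+: w
        · obtain ⟨x, hxX, w', rfl⟩ := hx1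
          have hw' : w' ∈ F := hF _ hw w' ⟨x, [], by simp⟩
          have hxne : x ≠ [] := hpc.2.1 x hxX
          have hlen' : w'.length ≤ n := by
            have h1 : 1 ≤ x.length := List.length_pos_iff.mpr hxne
            simp only [List.length_append] at hlen
            omega
          obtain ⟨z, ⟨l, hl, rfl⟩, hpre⟩ := ih w' hw' hlen'
          refine ⟨x ++ l.flatten, ⟨x :: l, ?_, by simp⟩, ?_⟩
          · intro u hu
            rcases List.mem_cons.mp hu with h | h
            · subst h; exact hxX
            · exact hl u h
          · obtain ⟨t, ht⟩ := hpre
            exact ⟨t, by rw [List.append_assoc, ht]⟩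
        · by_cases hx2 : ∃ x ∈ X, w <+: x
          · obtain ⟨x, hxX, hp⟩ := hx2
            exact ⟨x, ⟨[x], by simp [hxX], by simp⟩, hp⟩
          · push_neg at hx1 hx2
            exfalso
            have hwne : w ≠ [] := by
              intro h; subst h
              obtain ⟨x, hxX⟩ := hpc.1
              exact hx2 x hxX (List.nil_prefix)
            have hY : IsPrefixCode (X ∪ {w}) := by
              refine ⟨⟨w, Or.inr rfl⟩, ?_, ?_⟩
              · rintro u (h | h)
                · exact hpc.2.1 u h
                · rw [h]; exact hwne
              · rintro u (hu | hu) v (hv | hv) hpre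
                · exact hpc.2.2 u hu v hv hpre
                · exact absurd (hu) (by rw [hv] at hpre; exact fun h => hx1 u h hpre)
                · exact absurd (hv) (by rw [hu] at hpre; exact fun h => hx2 v h hpre)
                · rw [hu, hv]
            have heq := hmax (X ∪ {w}) hY
              (by rintro u (h | h); exact hXF h; rw [h]; exact hw)
              Set.subset_union_left
            have hwX : w ∈ X := by rw [← heq]; exact Or.inr rfl
            exact hx1 w hwX List.prefix_rfl
    intro w hw
    exact key w.length w hw le_rfl
  · intro hcomp
    refine ⟨hX, hXF, ?_⟩
    intro Y hY hYF hXY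
    refine Set.Subset.antisymm ?_ hXY
    intro y hy
    obtain ⟨z, ⟨l, hl, rfl⟩, hpre⟩ := hcomp y (hYF hy)
    cases l with
    | nil =>
      simp only [List.flatten_nil] at hpre
      exact absurd (List.prefix_nil.mp hpre) (hY.2.1 y hy)
    | cons x rest =>
      have hxX : x ∈ X := hl x (by simp)
      have hx : x <+: (x :: rest).flatten := by
        simp only [List.flatten_cons]
        exact List.prefix_append x rest.flatten
      rcases List.prefix_or_prefix_of_prefix hpre hx with h | h
      · rw [hY.2.2 y hy x (hXY hxX) h]; exact hxX
      · rw [← hY.2.2 x (hXY hxX) y hy h]; exact hxX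
end

section
/- Let A be a finite alphabet and let X be a bifix code over A. Then for all words u, v, w ∈ A*, the inequality δ_X(v) ≤ δ_X(uvw) holds. -/
section AuxProofs

open PaperDefs

variable {A : Type} {X : Set (List A)}

/-- Greedy decomposition stripping suffixes in `X` from the right. -/
lemma suffix_decomp (hne : ∀ x ∈ X, x ≠ []) :
    ∀ t : List A, ∃ p x, (¬ ∃ s ∈ X, s <:+ p) ∧ InStar X x ∧ p ++ x = t := by
  suffices h : ∀ n (t : List A), t.length ≤ n →
      ∃ p x, (¬ ∃ s ∈ X, s <:+ p) ∧ InStar X x ∧ p ++ x = t by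
    intro t; exact h t.length t le_rfl
  intro n
  induction n with
  | zero =>
    intro t ht
    have ht0 : t = [] := List.length_eq_zero_iff.mp (Nat.le_zero.mp ht)
    refine ⟨t, [], ?_, ⟨[], by simp, rfl⟩, by simp⟩
    rintro ⟨s, hs, hsuf⟩
    exact hne s hs (List.eq_nil_of_suffix_nil (ht0 ▸ hsuf))
  | succ n ih =>
    intro t ht
    by_cases h : ∃ s ∈ X, s <:+ t
    · obtain ⟨y, hy, r, hr⟩ := h
      have hylen : 0 < y.length := List.length_pos_iff.mpr (hne y hy)
      have hrlen : r.length ≤ n := by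
        have : r.length + y.length = t.length := by
          rw [← hr]; simp
        omega
      obtain ⟨p, x, h1, ⟨l, hl, hfl⟩, h3⟩ := ih r hrlen
      refine ⟨p, x ++ y, h1, ⟨l ++ [y], ?_, by simp [hfl]⟩, ?_⟩
      · intro u hu
        rcases List.mem_append.mp hu with h' | h'
        · exact hl u h'
        · simp at h'; subst h'; exact hy
      · rw [← List.append_assoc, h3, hr]
    · exact ⟨t, [], h, ⟨[], by simp, rfl⟩, by simp⟩

/-- Greedy decomposition stripping prefixes in `X` from the left. -/
lemma prefix_decomp (hne : ∀ x ∈ X, x ≠ []) :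
    ∀ t : List A, ∃ x s, (¬ ∃ z ∈ X, z <+: s) ∧ InStar X x ∧ x ++ s = t := by
  suffices h : ∀ n (t : List A), t.length ≤ n →
      ∃ x s, (¬ ∃ z ∈ X, z <+: s) ∧ InStar X x ∧ x ++ s = t by
    intro t; exact h t.length t le_rfl
  intro n
  induction n with
  | zero =>
    intro t ht
    have ht0 : t = [] := List.length_eq_zero_iff.mp (Nat.le_zero.mp ht)
    refine ⟨[], t, ?_, ⟨[], by simp, rfl⟩, by simp⟩
    rintro ⟨s, hs, hpre⟩
    exact hne s hs (List.eq_nil_of_prefix_nil (ht0 ▸ hpre))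
  | succ n ih =>
    intro t ht
    by_cases h : ∃ s ∈ X, s <+: t
    · obtain ⟨y, hy, r, hr⟩ := h
      have hylen : 0 < y.length := List.length_pos_iff.mpr (hne y hy)
      have hrlen : r.length ≤ n := by
        have : y.length + r.length = t.length := by
          rw [← hr]; simp
        omega
      obtain ⟨x, s, h1, ⟨l, hl, hfl⟩, h3⟩ := ih r hrlen
      refine ⟨y ++ x, s, h1, ⟨y :: l, ?_, by simp [hfl]⟩, ?_⟩
      · intro u hu
        rcases List.mem_cons.mp hu with h' | h'
        · subst h'; exact hy
        · exact hl u h'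
      · rw [List.append_assoc, h3, hr]
    · exact ⟨[], t, h, ⟨[], by simp, rfl⟩, by simp⟩

/-- Uniqueness of the first component of a right-greedy decomposition,
for a suffix code. -/
lemma suffix_uniq (hX : IsSuffixCode X) :
    ∀ l1 l2 : List (List A), (∀ u ∈ l1, u ∈ X) → (∀ u ∈ l2, u ∈ X) →
    ∀ p1 p2 : List A, (¬ ∃ s ∈ X, s <:+ p1) → (¬ ∃ s ∈ X, s <:+ p2) →
    p1 ++ l1.flatten = p2 ++ l2.flatten → p1 = p2 := by
  intro l1
  induction l1 using List.reverseRecOn with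
  | nil =>
    intro l2
    induction l2 using List.reverseRecOn with
    | nil => intro _ _ p1 p2 _ _ heq; simpa using heq
    | append_singleton l2' y ih =>
      intro _ hm2 p1 p2 h1 h2 heq
      exfalso
      apply h1
      refine ⟨y, hm2 y (by simp), ⟨p2 ++ l2'.flatten, ?_⟩⟩
      simp at heq ⊢
      rw [heq]
  | append_singleton l1' y1 ih =>
    intro l2 hm1 hm2 p1 p2 h1 h2 heq
    cases l2 using List.reverseRecOn with
    | nil =>
      exfalso
      apply h2
      refine ⟨y1, hm1 y1 (by simp), ⟨p1 ++ l1'.flatten, ?_⟩⟩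
      simp at heq ⊢
      rw [heq]
    | append_singleton l2' y2 =>
      have heq' : (p1 ++ l1'.flatten) ++ y1 = (p2 ++ l2'.flatten) ++ y2 := by
        simpa [List.append_assoc] using heq
      have hy1 : y1 <:+ (p2 ++ l2'.flatten) ++ y2 := heq' ▸ ⟨p1 ++ l1'.flatten, rfl⟩
      have hy2 : y2 <:+ (p2 ++ l2'.flatten) ++ y2 := ⟨p2 ++ l2'.flatten, rfl⟩
      have hy12 : y1 = y2 := by
        rcases List.suffix_or_suffix_of_suffix hy1 hy2 with h | h
        · exact hX.2.2 y1 (hm1 y1 (by simp)) y2 (hm2 y2 (by simp)) h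
        · exact (hX.2.2 y2 (hm2 y2 (by simp)) y1 (hm1 y1 (by simp)) h).symm
      subst hy12
      have heq'' : p1 ++ l1'.flatten = p2 ++ l2'.flatten :=
        List.append_cancel_right heq'
      exact ih l2' (fun u hu => hm1 u (by simp [hu])) (fun u hu => hm2 u (by simp [hu]))
        p1 p2 h1 h2 heq''

/-- Uniqueness of the last component of a left-greedy decomposition,
for a prefix code. -/
lemma prefix_uniq (hX : IsPrefixCode X) :
    ∀ l1 l2 : List (List A), (∀ u ∈ l1, u ∈ X) → (∀ u ∈ l2, u ∈ X) →
    ∀ s1 s2 : List A, (¬ ∃ z ∈ X, z <+: s1) → (¬ ∃ z ∈ X, z <+: s2) →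
    l1.flatten ++ s1 = l2.flatten ++ s2 → s1 = s2 := by
  intro l1
  induction l1 with
  | nil =>
    intro l2
    cases l2 with
    | nil => intro _ _ s1 s2 _ _ heq; simpa using heq
    | cons y l2' =>
      intro _ hm2 s1 s2 h1 h2 heq
      exfalso
      apply h1
      refine ⟨y, hm2 y (by simp), ⟨l2'.flatten ++ s2, ?_⟩⟩
      simp at heq ⊢
      rw [heq]
  | cons y1 l1' ih =>
    intro l2 hm1 hm2 s1 s2 h1 h2 heq
    cases l2 with
    | nil =>
      exfalso
      apply h2
      refine ⟨y1, hm1 y1 (by simp), ⟨l1'.flatten ++ s1, ?_⟩⟩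
      simp at heq ⊢
      rw [heq]
    | cons y2 l2' =>
      have heq' : y1 ++ (l1'.flatten ++ s1) = y2 ++ (l2'.flatten ++ s2) := by
        simpa [List.append_assoc] using heq
      have hy1 : y1 <+: y2 ++ (l2'.flatten ++ s2) := heq' ▸ ⟨l1'.flatten ++ s1, rfl⟩
      have hy2 : y2 <+: y2 ++ (l2'.flatten ++ s2) := ⟨l2'.flatten ++ s2, rfl⟩
      have hy12 : y1 = y2 := by
        rcases List.prefix_or_prefix_of_prefix hy1 hy2 with h | h
        · exact hX.2.2 y1 (hm1 y1 (by simp)) y2 (hm2 y2 (by simp)) h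
        · exact (hX.2.2 y2 (hm2 y2 (by simp)) y1 (hm1 y1 (by simp)) h).symm
      subst hy12
      have heq'' : l1'.flatten ++ s1 = l2'.flatten ++ s2 :=
        List.append_cancel_left heq'
      exact ih l2' (fun u hu => hm1 u (by simp [hu])) (fun u hu => hm2 u (by simp [hu]))
        s1 s2 h1 h2 heq''

lemma image_suffix (hX : IsSuffixCode X) (w : List A) :
    (fun p : List A × List A × List A => p.2.2) '' {p | IsParse X w p}
      = {s | s <:+ w ∧ ¬ ∃ x ∈ X, x <+: s} := by
  ext s
  constructor
  · rintro ⟨⟨p, x, s'⟩, ⟨heq, h1, h2, h3⟩, rfl⟩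
    exact ⟨⟨p ++ x, by simpa [List.append_assoc] using heq⟩, h3⟩
  · rintro ⟨⟨t, ht⟩, hnp⟩
    obtain ⟨p, x, h1, h2, h3⟩ := suffix_decomp hX.2.1 t
    refine ⟨(p, x, s), ⟨?_, h1, h2, hnp⟩, rfl⟩
    show p ++ x ++ s = w
    rw [h3]; exact ht

lemma image_prefix (hX : IsPrefixCode X) (w : List A) :
    (fun p : List A × List A × List A => p.1) '' {p | IsParse X w p}
      = {p | p <+: w ∧ ¬ ∃ x ∈ X, x <:+ p} := by
  ext q
  constructor
  · rintro ⟨⟨p, x, s'⟩, ⟨heq, h1, h2, h3⟩, rfl⟩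
    exact ⟨⟨x ++ s', by simpa [List.append_assoc] using heq⟩, h1⟩
  · rintro ⟨⟨t, ht⟩, hns⟩
    obtain ⟨x, s, h1, h2, h3⟩ := prefix_decomp hX.2.1 t
    refine ⟨(q, x, s), ⟨?_, hns, h2, h1⟩, rfl⟩
    show q ++ x ++ s = w
    rw [List.append_assoc, h3]; exact ht

lemma delta_eq_suffixes (hX : IsSuffixCode X) (w : List A) :
    delta X w = {s | s <:+ w ∧ ¬ ∃ x ∈ X, x <+: s}.ncard := by
  rw [delta, ← image_suffix hX w, Set.ncard_image_of_injOn]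
  rintro ⟨p1, x1, s1⟩ ⟨heq1, h11, ⟨l1, hl1, hfl1⟩, h13⟩ ⟨p2, x2, s2⟩ ⟨heq2, h21, ⟨l2, hl2, hfl2⟩, h23⟩ hss
  simp only at hss heq1 heq2 h11 h13 h21 h23 hfl1 hfl2
  subst hss
  have hpx : p1 ++ x1 = p2 ++ x2 :=
    List.append_cancel_right (heq1.trans heq2.symm)
  have hp : p1 = p2 := by
    apply suffix_uniq hX l1 l2 hl1 hl2 p1 p2 h11 h21
    rw [hfl1, hfl2]; exact hpx
  subst hp
  have hx : x1 = x2 := List.append_cancel_left hpx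
  simp [hx]

lemma delta_eq_prefixes (hX : IsPrefixCode X) (w : List A) :
    delta X w = {p | p <+: w ∧ ¬ ∃ x ∈ X, x <:+ p}.ncard := by
  rw [delta, ← image_prefix hX w, Set.ncard_image_of_injOn]
  rintro ⟨p1, x1, s1⟩ ⟨heq1, h11, ⟨l1, hl1, hfl1⟩, h13⟩ ⟨p2, x2, s2⟩ ⟨heq2, h21, ⟨l2, hl2, hfl2⟩, h23⟩ hss
  simp only at hss heq1 heq2 h11 h13 h21 h23 hfl1 hfl2
  subst hss
  have hxs : x1 ++ s1 = x2 ++ s2 := by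
    have h := heq1.trans heq2.symm
    rw [List.append_assoc, List.append_assoc] at h
    exact List.append_cancel_left h
  have hs : s1 = s2 := by
    apply prefix_uniq hX l1 l2 hl1 hl2 s1 s2 h13 h23
    rw [hfl1, hfl2]; exact hxs
  subst hs
  have hx : x1 = x2 := List.append_cancel_right hxs
  simp [hx]

lemma suffixes_finite (w : List A) :
    {s : List A | s <:+ w ∧ ¬ ∃ x ∈ X, x <+: s}.Finite :=
  (w.tails.finite_toSet).subset fun s hs => (List.mem_tails _ _).mpr hs.1

lemma prefixes_finite (w : List A) :
    {p : List A | p <+: w ∧ ¬ ∃ x ∈ X, x <:+ p}.Finite :=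
  (w.inits.finite_toSet).subset fun p hp => (List.mem_inits _ _).mpr hp.1

end AuxProofs

open PaperDefs in
theorem stmt_8 {A : Type} [Fintype A]
    (X : Set (List A)) (hX : IsBifixCode X) (u v w : List A) :
    delta X v ≤ delta X (u ++ v ++ w) := by
  have h1 : delta X v ≤ delta X (u ++ v) := by
    rw [delta_eq_suffixes hX.2, delta_eq_suffixes hX.2]
    exact Set.ncard_le_ncard
      (fun s hs => ⟨hs.1.trans (List.suffix_append u v), hs.2⟩) (suffixes_finite _)
  have h2 : delta X (u ++ v) ≤ delta X ((u ++ v) ++ w) := by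
    rw [delta_eq_prefixes hX.1, delta_eq_prefixes hX.1]
    exact Set.ncard_le_ncard
      (fun p hp => ⟨hp.1.trans (List.prefix_append (u ++ v) w), hp.2⟩) (prefixes_finite _)
  calc delta X v ≤ delta X (u ++ v) := h1
    _ ≤ delta X ((u ++ v) ++ w) := h2
    _ = delta X (u ++ v ++ w) := by rw [List.append_assoc]
end
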